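/- arXiv:2601.07045 — 6 statements merged into one kernel-verified Lean document; each statement's English description precedes it below -/
import Mathlib

section
/- The GIST kernel K satisfies detailed balance with respect to μ: for all θ, θ' ∈ S, μ(θ)·K(θ,θ') = μ(θ')·K(θ',θ). Consequently, the Markov chain on S defined by the GIST transition is reversible with respect to μ. -/
/-! The flux `μ(θ)·pa(v|θ)·α(θ,v) = min(μ̂(θ,v), μ̂(Ψ(θ,v)))` through a proposal `(θ,v)` is
invariant under `Ψ`. Off the diagonal, `μ(θ)·K(θ,θ')` is the total flux through proposals
`z` with `z.1 = θ` and `(Ψ z).1 = θ'`, and reindexing this sum by the involution `Ψ` turns it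
into the total flux from `θ'` to `θ`. -/

open Function

theorem mul_ite_min_one_div {a b : ℝ} (ha : 0 ≤ a) (hb : 0 ≤ b) :
    a * (if 0 < a then min 1 (b / a) else 1) = min a b := by
  rcases ha.lt_or_eq with ha | rfl
  · rw [if_pos ha, mul_min_of_nonneg _ _ ha.le, mul_one, mul_div_cancel₀ _ ha.ne']
  · simp [hb]

section Reindex

variable {S V M : Type*} [AddCommMonoid M] [TopologicalSpace M] [DecidableEq S]

theorem tsum_prodMk_eq_tsum_ite (f : S × V → M) (θ : S) :
    ∑' v, f (θ, v) = ∑' z : S × V, if z.1 = θ then f z else 0 := by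
  rw [← (Prod.mk_right_injective θ).tsum_eq]
  · simp
  · rintro ⟨θ₀, v⟩ hz
    obtain rfl : θ₀ = θ := by by_contra h; simp [h] at hz
    exact ⟨v, rfl⟩

theorem tsum_ite_eq_fst_involutive_comm {Ψ : S × V → S × V} (hΨ : Involutive Ψ)
    {w : S × V → M} (hw : ∀ z, w (Ψ z) = w z) (θ θ' : S) :
    ∑' v, (if θ' = (Ψ (θ, v)).1 then w (θ, v) else 0) =
      ∑' v, (if θ = (Ψ (θ', v)).1 then w (θ', v) else 0) := by
  rw [tsum_prodMk_eq_tsum_ite (fun z ↦ if θ' = (Ψ z).1 then w z else 0),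
    tsum_prodMk_eq_tsum_ite (fun z ↦ if θ = (Ψ z).1 then w z else 0),
    ← (hΨ.toPerm Ψ).tsum_eq]
  refine tsum_congr fun z ↦ ?_
  simp only [Involutive.coe_toPerm, hΨ z, hw]
  split_ifs <;> grind

end Reindex

theorem gist_detailed_balance_general
    {S V : Type*} [DecidableEq S]
    (μ : S → ℝ) (hμpos : ∀ θ, 0 < μ θ)
    (pa : S → V → ℝ) (hpa0 : ∀ θ v, 0 ≤ pa θ v)
    (Ψ : S × V → S × V) (hΨ : Function.Involutive Ψ)
    (μhat : S × V → ℝ) (hμhat : ∀ z, μhat z = μ z.1 * pa z.1 z.2)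
    (α : S × V → ℝ)
    (hα : ∀ z, α z = if 0 < μhat z then min 1 (μhat (Ψ z) / μhat z) else 1)
    (K : S → S → ℝ)
    (hK : ∀ θ θ', K θ θ' =
      ∑' v : V, pa θ v *
        (α (θ, v) * (if θ' = (Ψ (θ, v)).1 then 1 else 0)
          + (1 - α (θ, v)) * (if θ' = θ then 1 else 0))) :
    ∀ θ θ' : S, μ θ * K θ θ' = μ θ' * K θ' θ := by
  have hμhat0 (z : S × V) : 0 ≤ μhat z := hμhat z ▸ mul_nonneg (hμpos z.1).le (hpa0 z.1 z.2)
  have hflux (z : S × V) : μhat z * α z = min (μhat z) (μhat (Ψ z)) := by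
    rw [hα]; exact mul_ite_min_one_div (hμhat0 z) (hμhat0 (Ψ z))
  have hoff_diag (θ θ' : S) (hne : θ ≠ θ') : μ θ * K θ θ' =
      ∑' v, if θ' = (Ψ (θ, v)).1 then min (μhat (θ, v)) (μhat (Ψ (θ, v))) else 0 := by
    rw [hK, ← tsum_mul_left]
    refine tsum_congr fun v ↦ ?_
    rw [if_neg hne.symm, ← hflux, hμhat]
    split_ifs <;> ring
  intro θ θ'
  rcases eq_or_ne θ θ' with rfl | hne
  · rfl
  rw [hoff_diag θ θ' hne, hoff_diag θ' θ hne.symm]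
  exact tsum_ite_eq_fst_involutive_comm hΨ (w := fun z ↦ min (μhat z) (μhat (Ψ z)))
    (fun z ↦ by rw [hΨ z, min_comm]) θ θ'

/-- **GIST detailed balance.**
Let `S` and `V` be countable sets, `μ` a positive probability mass function on `S`,
`pa (·|θ)` a probability mass function on `V` for each `θ`, and `Ψ : S × V → S × V`
an involution.  With the extended target `μ̂(θ,v) = μ(θ)·pa(v|θ)`, the acceptance
probability `α(θ,v) = min(1, μ̂(Ψ(θ,v))/μ̂(θ,v))` (set to `1` when `μ̂(θ,v) = 0`),
the GIST transition kernel
`K(θ,θ') = Σ_v pa(v|θ)·[α(θ,v)·1{θ' = Ψ₁(θ,v)} + (1−α(θ,v))·1{θ' = θ}]`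
satisfies detailed balance with respect to `μ`:
`μ(θ)·K(θ,θ') = μ(θ')·K(θ',θ)` for all `θ, θ'`; hence the GIST chain is
reversible with respect to `μ`. -/
theorem gist_detailed_balance
    {S V : Type*} [Countable S] [Countable V] [DecidableEq S]
    (μ : S → ℝ) (hμpos : ∀ θ, 0 < μ θ) (hμsum : HasSum μ 1)
    (pa : S → V → ℝ) (hpa0 : ∀ θ v, 0 ≤ pa θ v) (hpasum : ∀ θ, HasSum (pa θ) 1)
    (Ψ : S × V → S × V) (hΨ : Function.Involutive Ψ)
    (μhat : S × V → ℝ) (hμhat : ∀ z, μhat z = μ z.1 * pa z.1 z.2)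
    (α : S × V → ℝ)
    (hα : ∀ z, α z = if 0 < μhat z then min 1 (μhat (Ψ z) / μhat z) else 1)
    (K : S → S → ℝ)
    (hK : ∀ θ θ', K θ θ' =
      ∑' v : V, pa θ v *
        (α (θ, v) * (if θ' = (Ψ (θ, v)).1 then 1 else 0)
          + (1 - α (θ, v)) * (if θ' = θ then 1 else 0))) :
    ∀ θ θ' : S, μ θ * K θ θ' = μ θ' * K θ' θ :=
  gist_detailed_balance_general μ hμpos pa hpa0 Ψ hΨ μhat hμhat α hα K hK
end

section
/- The full-orbit categorical kernel K satisfies detailed balance with respect to w: w(σ)·K(σ,σ') = w(σ')·K(σ',σ) for all σ, σ' ∈ S_n. Consequently K is reversible with respect to, and leaves invariant, the probability distribution P(σ) = w(σ)/Σ_{ρ∈S_n} w(ρ). -/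
/-!
The full η-orbit `{σ * η ^ t | t < orderOf η}` of `σ` is the left coset `σ ⟨η⟩`, listed without
repetition. So the η-summand of the kernel moves `σ` to `σ'` with probability `w σ' / W` when
`σ` and `σ'` lie in the same coset, `W` being the total weight of that coset, and with probability
`0` otherwise; after multiplication by `w σ` this is symmetric in `σ, σ'`. Detailed balance survives
the mixture over `q` and the normalisation to `P`, and combined with unit row sums it makes `P`
invariant.
-/

open Finset Subgroup

section DetailedBalance
variable {α : Type*}

def DetailedBalance (π : α → ℝ) (K : α → α → ℝ) : Prop :=
  ∀ x y, π x * K x y = π y * K y x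

theorem DetailedBalance.sum_mul {ι : Type*} [Fintype ι] {π : α → ℝ} {k : ι → α → α → ℝ}
    (h : ∀ i, DetailedBalance π (k i)) (q : ι → ℝ) :
    DetailedBalance π (fun x y => ∑ i, q i * k i x y) := by
  intro x y
  simp only [mul_sum, mul_left_comm (π _), h _ x y]

theorem DetailedBalance.div_const {π : α → ℝ} {K : α → α → ℝ} (h : DetailedBalance π K) (c : ℝ) :
    DetailedBalance (fun x => π x / c) K := by
  intro x y
  rw [div_mul_eq_mul_div, div_mul_eq_mul_div, h x y]

theorem DetailedBalance.sum_mul_eq [Fintype α] {π : α → ℝ} {K : α → α → ℝ}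
    (h : DetailedBalance π K) (hK : ∀ x, ∑ y, K x y = 1) (y : α) :
    ∑ x, π x * K x y = π y := by
  simp only [fun x => h x y, ← mul_sum, hK, mul_one]

theorem sum_sum_mul_eq_one [Fintype α] {ι : Type*} [Fintype ι] {q : ι → ℝ} {k : ι → α → α → ℝ}
    (hq : ∑ i, q i = 1) (hk : ∀ i x, ∑ y, k i x y = 1) (x : α) :
    ∑ y, ∑ i, q i * k i x y = 1 := by
  rw [sum_comm]
  simp only [← mul_sum, hk, mul_one, hq]

end DetailedBalance

section FullOrbitMove
variable {G : Type*} [Group G] [Fintype G]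

open Classical in
theorem sum_range_orderOf_mul_pow {M : Type*} [AddCommMonoid M] (f : G → M) (σ η : G) :
    ∑ t ∈ range (orderOf η), f (σ * η ^ t) =
      ∑ τ with QuotientGroup.mk (s := zpowers η) τ = σ, f τ := by
  have hcoset : (range (orderOf η)).image (σ * η ^ ·) =
      ({τ | QuotientGroup.mk (s := zpowers η) τ = σ} : Finset G) := by
    ext τ
    simp only [mem_image, mem_filter, mem_univ, true_and, @eq_comm (G ⧸ zpowers η) _,
      QuotientGroup.eq, (isOfFinOrder_of_finite η).mem_zpowers_iff_mem_range_orderOf,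
      eq_inv_mul_iff_mul_eq]
  rw [← hcoset, sum_image]
  intro s hs t ht hst
  exact pow_injOn_Iio_orderOf (mem_range.1 hs) (mem_range.1 ht) (mul_left_cancel hst)

variable [DecidableEq G]

noncomputable def fullOrbitMove (w : G → ℝ) (η σ σ' : G) : ℝ :=
  (∑ r ∈ range (orderOf η), (if σ * η ^ r = σ' then (1 : ℝ) else 0) * w (σ * η ^ r)) /
    ∑ t ∈ range (orderOf η), w (σ * η ^ t)

open Classical in
theorem fullOrbitMove_eq (w : G → ℝ) (η σ σ' : G) :
    fullOrbitMove w η σ σ' =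
      (if QuotientGroup.mk (s := zpowers η) σ' = σ then w σ' else 0) /
        ∑ τ with QuotientGroup.mk (s := zpowers η) τ = σ, w τ := by
  rw [fullOrbitMove, sum_range_orderOf_mul_pow w,
    sum_range_orderOf_mul_pow (fun τ => (if τ = σ' then (1 : ℝ) else 0) * w τ)]
  simp [sum_filter, ite_mul]

theorem detailedBalance_fullOrbitMove (w : G → ℝ) (η : G) :
    DetailedBalance w (fullOrbitMove w η) := by
  intro σ σ'
  rw [fullOrbitMove_eq, fullOrbitMove_eq]
  by_cases h : QuotientGroup.mk (s := zpowers η) σ' = σ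
  · rw [if_pos h, if_pos h.symm, h]
    ring
  · rw [if_neg h, if_neg (Ne.symm h), zero_div, zero_div, mul_zero, mul_zero]

theorem sum_fullOrbitMove {w : G → ℝ} (hw : ∀ σ, 0 < w σ) (η σ : G) :
    ∑ σ', fullOrbitMove w η σ σ' = 1 := by
  classical
  simp only [fullOrbitMove_eq, ← sum_div, ← sum_filter]
  exact div_self (sum_pos (fun τ _ => hw τ) ⟨σ, by simp⟩).ne'

end FullOrbitMove

theorem fullOrbit_detailed_balance_general {n : ℕ}
    (w : Equiv.Perm (Fin n) → ℝ) (hw : ∀ σ, 0 < w σ)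
    (q : Equiv.Perm (Fin n) → ℝ)
    (hq1 : ∑ η : Equiv.Perm (Fin n), q η = 1)
    (K : Equiv.Perm (Fin n) → Equiv.Perm (Fin n) → ℝ)
    (hK : ∀ σ σ', K σ σ' =
      ∑ η : Equiv.Perm (Fin n), q η *
        (∑ r ∈ Finset.range (orderOf η),
            (if σ * η ^ r = σ' then (1 : ℝ) else 0) * w (σ * η ^ r)) /
        (∑ t ∈ Finset.range (orderOf η), w (σ * η ^ t)))
    (P : Equiv.Perm (Fin n) → ℝ)
    (hP : ∀ σ, P σ = w σ / ∑ ρ : Equiv.Perm (Fin n), w ρ) :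
    (∀ σ σ', w σ * K σ σ' = w σ' * K σ' σ) ∧
    (∀ σ σ', P σ * K σ σ' = P σ' * K σ' σ) ∧
    (∀ σ', ∑ σ : Equiv.Perm (Fin n), P σ * K σ σ' = P σ') := by
  obtain rfl : K = fun σ σ' => ∑ η, q η * fullOrbitMove w η σ σ' := by
    ext σ σ'
    simp only [hK, fullOrbitMove, mul_div_assoc]
  obtain rfl : P = fun σ => w σ / ∑ ρ, w ρ := funext hP
  have hw_balance := DetailedBalance.sum_mul (detailedBalance_fullOrbitMove w) q
  have hP_balance := hw_balance.div_const (∑ ρ, w ρ)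
  exact ⟨hw_balance, hP_balance,
    hP_balance.sum_mul_eq (sum_sum_mul_eq_one hq1 fun η => sum_fullOrbitMove hw η)⟩

/-- **Detailed balance, reversibility and invariance of the full-orbit categorical kernel.**
Let `w : S_n → (0,∞)` be a positive weight function and `q` a probability mass
function on `S_n` (a state-independent direction law).  The full-orbit categorical
kernel
`K(σ,σ') = Σ_η q(η)·(Σ_{r<ord(η)} 1{σ∘η^r = σ'}·w(σ∘η^r)) / (Σ_{t<ord(η)} w(σ∘η^t))`
satisfies detailed balance with respect to `w`: `w(σ)·K(σ,σ') = w(σ')·K(σ',σ)`.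
Consequently `K` is reversible with respect to, and leaves invariant, the
probability distribution `P(σ) = w(σ)/Σ_ρ w(ρ)`. -/
theorem fullOrbit_detailed_balance {n : ℕ}
    (w : Equiv.Perm (Fin n) → ℝ) (hw : ∀ σ, 0 < w σ)
    (q : Equiv.Perm (Fin n) → ℝ) (hq0 : ∀ η, 0 ≤ q η)
    (hq1 : ∑ η : Equiv.Perm (Fin n), q η = 1)
    (K : Equiv.Perm (Fin n) → Equiv.Perm (Fin n) → ℝ)
    (hK : ∀ σ σ', K σ σ' =
      ∑ η : Equiv.Perm (Fin n), q η *
        (∑ r ∈ Finset.range (orderOf η),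
            (if σ * η ^ r = σ' then (1 : ℝ) else 0) * w (σ * η ^ r)) /
        (∑ t ∈ Finset.range (orderOf η), w (σ * η ^ t)))
    (P : Equiv.Perm (Fin n) → ℝ)
    (hP : ∀ σ, P σ = w σ / ∑ ρ : Equiv.Perm (Fin n), w ρ) :
    (∀ σ σ', w σ * K σ σ' = w σ' * K σ' σ) ∧
    (∀ σ σ', P σ * K σ σ' = P σ' * K σ' σ) ∧
    (∀ σ', ∑ σ : Equiv.Perm (Fin n), P σ * K σ σ' = P σ') :=
  fullOrbit_detailed_balance_general w hw q hq1 K hK P hP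
end

section
/- Let p and q be probability mass functions on a finite nonempty set I, and let ε ≥ 0 be such that e^{−ε}·p(t) ≤ q(t) ≤ e^{ε}·p(t) for all t ∈ I. Then TV(p,q) ≤ tanh(ε/2). -/
open Finset

/-!
With `λ = tanh (ε/2) = (e^ε - 1)/(e^ε + 1)` one has `(1 + λ)/(1 - λ) = e^ε`, so the one-sided bound
`q ≤ e^ε p` is equivalent to `q - p ≤ λ (p + q)`. Applying this pointwise in both directions gives
`|p t - q t| ≤ λ (p t + q t)`, and summing over `t` gives `Σ |p t - q t| ≤ 2λ`.
-/

namespace Real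

theorem tanh_half_eq (x : ℝ) : tanh (x / 2) = (exp x - 1) / (exp x + 1) := by
  have hsq : exp x = exp (x / 2) * exp (x / 2) := by rw [← exp_add, add_halves]
  rw [tanh_eq_sinh_div_cosh, sinh_eq, cosh_eq, exp_neg, hsq]
  field_simp

theorem sub_le_tanh_half_mul_add {a b x : ℝ} (h : b ≤ exp x * a) :
    b - a ≤ tanh (x / 2) * (a + b) := by
  have hpos : 0 < exp x + 1 := by positivity
  rw [tanh_half_eq, div_mul_eq_mul_div, le_div_iff₀ hpos]
  linarith

theorem abs_sub_le_tanh_half_mul_add {a b x : ℝ} (hab : a ≤ exp x * b) (hba : b ≤ exp x * a) :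
    |a - b| ≤ tanh (x / 2) * (a + b) := by
  rw [abs_sub_comm, abs_le]
  constructor
  · linarith [sub_le_tanh_half_mul_add hab]
  · exact sub_le_tanh_half_mul_add hba

end Real

theorem tv_le_tanh_of_bounded_llr_general {I : Type*} [Fintype I]
    (p q : I → ℝ)
    (hp1 : ∑ t, p t = 1)
    (hq1 : ∑ t, q t = 1)
    (ε : ℝ)
    (hlo : ∀ t, Real.exp (-ε) * p t ≤ q t)
    (hhi : ∀ t, q t ≤ Real.exp ε * p t) :
    (1 / 2) * ∑ t, |p t - q t| ≤ Real.tanh (ε / 2) := by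
  have hpq : ∀ t, p t ≤ Real.exp ε * q t := fun t =>
    (inv_mul_le_iff₀ (Real.exp_pos ε)).1 (by rw [← Real.exp_neg]; exact hlo t)
  calc (1 / 2) * ∑ t, |p t - q t|
      ≤ (1 / 2) * ∑ t, Real.tanh (ε / 2) * (p t + q t) := by
        gcongr with t
        exact Real.abs_sub_le_tanh_half_mul_add (hpq t) (hhi t)
    _ = Real.tanh (ε / 2) := by rw [← mul_sum, sum_add_distrib, hp1, hq1]; ring

/-- **TV bound under bounded log-likelihood ratio.**
Let `p` and `q` be probability mass functions on a finite nonempty set `I` and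
`ε ≥ 0` be such that `e^{−ε}·p(t) ≤ q(t) ≤ e^{ε}·p(t)` for all `t ∈ I`.  Then
`TV(p,q) = (1/2)·Σ_t |p(t) − q(t)| ≤ tanh(ε/2)`. -/
theorem tv_le_tanh_of_bounded_llr {I : Type*} [Fintype I] [Nonempty I]
    (p q : I → ℝ)
    (hp0 : ∀ t, 0 ≤ p t) (hp1 : ∑ t, p t = 1)
    (hq0 : ∀ t, 0 ≤ q t) (hq1 : ∑ t, q t = 1)
    (ε : ℝ) (hε : 0 ≤ ε)
    (hlo : ∀ t, Real.exp (-ε) * p t ≤ q t)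
    (hhi : ∀ t, q t ≤ Real.exp ε * p t) :
    (1 / 2) * ∑ t, |p t - q t| ≤ Real.tanh (ε / 2) :=
  tv_le_tanh_of_bounded_llr_general p q hp1 hq1 ε hlo hhi
end

section
/- Let E : S_n → ℝ, β > 0, and L_E ≥ 0 satisfy the Lipschitz condition |E(π) − E(ρ)| ≤ L_E·d_Cay(π,ρ) for all π, ρ ∈ S_n. Let I be a finite nonempty index set, let k ≥ 1 be an integer, and let (σ_t)_{t∈I} and (σ'_t)_{t∈I} be families in S_n with d_Cay(σ_t, σ'_t) ≤ k for all t ∈ I. Define the categorical laws p(t) = w(σ_t)/Σ_{s∈I} w(σ_s) and q(t) = w(σ'_t)/Σ_{s∈I} w(σ'_s), where w(σ) = exp(−β·E(σ)). Then TV(p,q) ≤ tanh(β·L_E·k). In particular, when k = 1 one has TV(p,q) ≤ tanh(β·L_E). -/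
/-!
With `c = β·L_E·k`, the Lipschitz bound puts every weight ratio `w(σ_t) / w(σ'_t)` in
`[e^{-c}, e^{c}]`. Writing `a_t = w(σ_t)`, `b_t = w(σ'_t)` with sums `A`, `B`, the total variation
is `(1 / 2AB) Σ_t |Σ_s (a_t b_s - b_t a_s)|`. Each cross ratio `a_t b_s / (b_t a_s)` lies in
`[e^{-2c}, e^{2c}]`, which is exactly the condition for `|x - y| ≤ tanh c · (x + y)`, since
`tanh c = (e^{2c} - 1) / (e^{2c} + 1)`. Summing over `s` and `t` gives `2AB · tanh c`.
-/

open Finset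

/-- The Cayley distance on `S_n`: the minimal number of transpositions whose
product equals `π⁻¹∘ρ` (so `d_Cay(π,ρ) = 0` iff `π = ρ`). -/
noncomputable def dCay {n : ℕ} (π ρ : Equiv.Perm (Fin n)) : ℕ :=
  sInf {k | ∃ l : List (Equiv.Perm (Fin n)),
    (∀ τ ∈ l, τ.IsSwap) ∧ l.prod = π⁻¹ * ρ ∧ l.length = k}

section

open Real

theorem sub_le_tanh_mul_add {c x y : ℝ} (h : x ≤ exp (2 * c) * y) :
    x - y ≤ tanh c * (x + y) := by
  rw [two_mul, exp_add] at h
  rw [tanh_eq, exp_neg, div_mul_eq_mul_div, le_div_iff₀ (by positivity)]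
  field_simp
  nlinarith

theorem abs_sub_le_tanh_mul_add {c x y : ℝ} (hxy : x ≤ exp (2 * c) * y)
    (hyx : y ≤ exp (2 * c) * x) : |x - y| ≤ tanh c * (x + y) :=
  abs_sub_le_iff.2 ⟨sub_le_tanh_mul_add hxy, add_comm x y ▸ sub_le_tanh_mul_add hyx⟩

theorem mul_le_exp_two_mul_mul {c x x' y y' : ℝ} (hx : x ≤ exp c * x') (hy : y ≤ exp c * y')
    (hy₀ : 0 ≤ y) (hx'₀ : 0 ≤ x') : x * y ≤ exp (2 * c) * (x' * y') :=
  calc x * y ≤ (exp c * x') * (exp c * y') := mul_le_mul hx hy hy₀ (by positivity)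
    _ = exp (2 * c) * (x' * y') := by rw [two_mul, exp_add]; ring

theorem half_sum_abs_sub_div_sum_le_tanh {I : Type*} [Fintype I] [Nonempty I] {a b : I → ℝ}
    (ha : ∀ t, 0 < a t) (hb : ∀ t, 0 < b t) {c : ℝ}
    (hab : ∀ t, a t ≤ exp c * b t) (hba : ∀ t, b t ≤ exp c * a t) :
    (1 / 2) * ∑ t, |a t / ∑ s, a s - b t / ∑ s, b s| ≤ tanh c := by
  set A := ∑ s, a s
  set B := ∑ s, b s
  have hA : 0 < A := sum_pos (fun s _ ↦ ha s) univ_nonempty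
  have hB : 0 < B := sum_pos (fun s _ ↦ hb s) univ_nonempty
  have key (t s : I) : |a t * b s - b t * a s| ≤ tanh c * (a t * b s + b t * a s) :=
    abs_sub_le_tanh_mul_add (mul_le_exp_two_mul_mul (hab t) (hba s) (hb s).le (hb t).le)
      (mul_le_exp_two_mul_mul (hba t) (hab s) (ha s).le (ha t).le)
  have term_eq (t : I) : |a t / A - b t / B| = |∑ s, (a t * b s - b t * a s)| / (A * B) := by
    rw [sum_sub_distrib, ← mul_sum, ← mul_sum, div_sub_div _ _ hA.ne' hB.ne', abs_div,
      abs_of_pos (mul_pos hA hB), mul_comm A]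
  calc (1 / 2) * ∑ t, |a t / A - b t / B|
      = (∑ t, |∑ s, (a t * b s - b t * a s)|) / (2 * (A * B)) := by
        rw [sum_congr rfl fun t _ ↦ term_eq t, ← sum_div]
        ring
    _ ≤ (∑ t, ∑ s, tanh c * (a t * b s + b t * a s)) / (2 * (A * B)) := by
        gcongr with t
        exact (abs_sum_le_sum_abs _ _).trans (sum_le_sum fun s _ ↦ key t s)
    _ = tanh c := by
        simp only [← mul_sum, sum_add_distrib, ← sum_mul]
        field_simp
        ring

theorem exp_neg_mul_le_exp_mul_mul_exp_neg_mul {β L e e' : ℝ} (hβ : 0 ≤ β) (h : |e - e'| ≤ L) :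
    exp (-β * e) ≤ exp (β * L) * exp (-β * e') := by
  rw [← exp_add, exp_le_exp]
  nlinarith [neg_abs_le (e - e')]

end

theorem mallows_orbit_tv_general {n : ℕ}
    (E : Equiv.Perm (Fin n) → ℝ) (β LE : ℝ) (hβ : 0 < β) (hLE : 0 ≤ LE)
    (hLip : ∀ π ρ : Equiv.Perm (Fin n), |E π - E ρ| ≤ LE * (dCay π ρ : ℝ))
    {I : Type*} [Fintype I] [Nonempty I]
    (k : ℕ)
    (σ σ' : I → Equiv.Perm (Fin n))
    (hprox : ∀ t, dCay (σ t) (σ' t) ≤ k)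
    (w : Equiv.Perm (Fin n) → ℝ) (hw : ∀ π, w π = Real.exp (-β * E π))
    (p q : I → ℝ)
    (hp : ∀ t, p t = w (σ t) / ∑ s, w (σ s))
    (hq : ∀ t, q t = w (σ' t) / ∑ s, w (σ' s)) :
    (1 / 2) * ∑ t, |p t - q t| ≤ Real.tanh (β * LE * k) := by
  have hw_pos (π) : 0 < w π := hw π ▸ Real.exp_pos _
  have hE (t : I) : |E (σ t) - E (σ' t)| ≤ LE * k :=
    (hLip _ _).trans (mul_le_mul_of_nonneg_left (by exact_mod_cast hprox t) hLE)
  simp only [hp, hq]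
  refine half_sum_abs_sub_div_sum_le_tanh (fun t ↦ hw_pos _) (fun t ↦ hw_pos _)
    (fun t ↦ ?_) (fun t ↦ ?_)
  · simpa only [hw, mul_assoc] using exp_neg_mul_le_exp_mul_mul_exp_neg_mul hβ.le (hE t)
  · simpa only [hw, mul_assoc] using
      exp_neg_mul_le_exp_mul_mul_exp_neg_mul hβ.le ((abs_sub_comm _ _).trans_le (hE t))

/-- **Orbit TV bound for Mallows weights.**
Let `E : S_n → ℝ`, `β > 0` and `L_E ≥ 0` satisfy the Lipschitz condition
`|E(π) − E(ρ)| ≤ L_E·d_Cay(π,ρ)`.  Let `I` be a finite nonempty index set,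
`k ≥ 1` an integer, and `(σ_t)`, `(σ'_t)` families in `S_n` with
`d_Cay(σ_t, σ'_t) ≤ k` for all `t`.  With `w(σ) = exp(−β·E(σ))` and categorical
laws `p(t) = w(σ_t)/Σ_s w(σ_s)`, `q(t) = w(σ'_t)/Σ_s w(σ'_s)`, one has
`TV(p,q) ≤ tanh(β·L_E·k)`; in particular `TV(p,q) ≤ tanh(β·L_E)` when `k = 1`. -/
theorem mallows_orbit_tv {n : ℕ}
    (E : Equiv.Perm (Fin n) → ℝ) (β LE : ℝ) (hβ : 0 < β) (hLE : 0 ≤ LE)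
    (hLip : ∀ π ρ : Equiv.Perm (Fin n), |E π - E ρ| ≤ LE * (dCay π ρ : ℝ))
    {I : Type*} [Fintype I] [Nonempty I]
    (k : ℕ) (hk : 1 ≤ k)
    (σ σ' : I → Equiv.Perm (Fin n))
    (hprox : ∀ t, dCay (σ t) (σ' t) ≤ k)
    (w : Equiv.Perm (Fin n) → ℝ) (hw : ∀ π, w π = Real.exp (-β * E π))
    (p q : I → ℝ)
    (hp : ∀ t, p t = w (σ t) / ∑ s, w (σ s))
    (hq : ∀ t, q t = w (σ' t) / ∑ s, w (σ' s)) :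
    (1 / 2) * ∑ t, |p t - q t| ≤ Real.tanh (β * LE * k) :=
  mallows_orbit_tv_general E β LE hβ hLE hLip k σ σ' hprox w hw p q hp hq
end

section
/- Let E : S_n → ℝ, β > 0, and L_E ≥ 0 satisfy |E(π) − E(ρ)| ≤ L_E·d_Cay(π,ρ) for all π, ρ ∈ S_n, and set w(σ) = exp(−β·E(σ)). Let I be a finite nonempty index set and let X, Y : I → S_n satisfy d_Cay(X_t, Y_t) ≤ 1 for all t ∈ I and d_Cay(X_s, Y_t) ≤ D for all s, t ∈ I, where D ≥ 1. Define p(t) = w(X_t)/Σ_{s∈I} w(X_s) and q(t) = w(Y_t)/Σ_{s∈I} w(Y_s). Then there exists a probability mass function γ on I×I whose marginals are p and q (i.e. Σ_{t} γ(s,t) = p(s) for all s and Σ_{s} γ(s,t) = q(t) for all t) such that Σ_{s,t∈I} γ(s,t)·d_Cay(X_s, Y_t) ≤ 1 + (D − 1)·tanh(β·L_E). -/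
/-!
Couple `p` and `q` maximally: put the common mass `min (p t) (q t)` on the diagonal, where the
distance is at most `1`, and spread the residual mass `1 - ∑ t, min (p t) (q t)` (the total
variation distance) as a product measure, paying at most `D` per unit. Since
`|E (X t) - E (Y t)| ≤ L_E`, the weights `w (X t)` and `w (Y t)` agree up to a factor
`exp (β L_E)`, so the overlap is at least `exp (-β L_E)` and the total variation at most
`1 - exp (-β L_E) ≤ tanh (β L_E)`.
-/

open Finset

lemma one_sub_exp_neg_le_tanh {a : ℝ} (ha : 0 ≤ a) : 1 - Real.exp (-a) ≤ Real.tanh a := by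
  rw [Real.tanh_eq_sinh_div_cosh, le_div_iff₀ (Real.cosh_pos a), Real.sinh_eq, Real.cosh_eq]
  have hprod : Real.exp a * Real.exp (-a) = 1 := by rw [← Real.exp_add]; simp
  have hle : Real.exp (-a) ≤ 1 := Real.exp_le_one_iff.mpr (by linarith)
  nlinarith [sq_nonneg (1 - Real.exp (-a)), Real.exp_pos (-a), Real.exp_pos a]

lemma exp_neg_mul_mul_exp_le {β L x y : ℝ} (hβ : 0 ≤ β) (hxy : |x - y| ≤ L) :
    Real.exp (-(β * L)) * Real.exp (-β * x) ≤ Real.exp (-β * y) := by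
  rw [← Real.exp_add, Real.exp_le_exp]
  nlinarith [(abs_le.mp hxy).1]

section Coupling

variable {I : Type*} [Fintype I]

lemma mul_sum_div_sum_of_nonneg {r : I → ℝ} (hr : ∀ t, 0 ≤ r t) (s : I) :
    r s * (∑ t, r t) / ∑ t, r t = r s := by
  by_cases h : ∑ t, r t = 0
  · simp [(sum_eq_zero_iff_of_nonneg fun t _ => hr t).mp h s (mem_univ s)]
  · field_simp

/-- The maximal coupling of `p` and `q`. If `p = q` the residuals vanish and so does the product
term, by `0 / 0 = 0`. -/
noncomputable def overlapCoupling [DecidableEq I] (p q : I → ℝ) (z : I × I) : ℝ :=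
  (if z.1 = z.2 then min (p z.1) (q z.1) else 0) +
    (p z.1 - min (p z.1) (q z.1)) * (q z.2 - min (p z.2) (q z.2)) /
      ∑ t, (p t - min (p t) (q t))

variable {p q : I → ℝ}

lemma sum_residual_eq (hpq : ∑ t, p t = ∑ t, q t) :
    ∑ t, (q t - min (p t) (q t)) = ∑ t, (p t - min (p t) (q t)) := by
  rw [sum_sub_distrib, sum_sub_distrib, hpq]

section DecidableEq

variable [DecidableEq I]

lemma overlapCoupling_nonneg (hp : ∀ t, 0 ≤ p t) (hq : ∀ t, 0 ≤ q t) (z : I × I) :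
    0 ≤ overlapCoupling p q z := by
  have hres : ∀ t, 0 ≤ p t - min (p t) (q t) := fun t => sub_nonneg.mpr (min_le_left _ _)
  refine add_nonneg ?_ (div_nonneg (mul_nonneg (hres _) (sub_nonneg.mpr (min_le_right _ _)))
    (sum_nonneg fun t _ => hres t))
  split_ifs
  exacts [le_min (hp _) (hq _), le_rfl]

lemma overlapCoupling_marginal_fst (hpq : ∑ t, p t = ∑ t, q t) (s : I) :
    ∑ t, overlapCoupling p q (s, t) = p s := by
  simp only [overlapCoupling, sum_add_distrib, sum_ite_eq, mem_univ, if_true]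
  rw [← sum_div, ← mul_sum, sum_residual_eq hpq,
    mul_sum_div_sum_of_nonneg (fun t => sub_nonneg.mpr (min_le_left _ _))]
  ring

lemma overlapCoupling_marginal_snd (hpq : ∑ t, p t = ∑ t, q t) (t : I) :
    ∑ s, overlapCoupling p q (s, t) = q t := by
  simp only [overlapCoupling, sum_add_distrib, sum_ite_eq', mem_univ, if_true]
  rw [← sum_div, ← sum_mul, ← sum_residual_eq hpq, mul_comm,
    mul_sum_div_sum_of_nonneg (fun t => sub_nonneg.mpr (min_le_right _ _))]
  ring

lemma sum_overlapCoupling_mul_le (hp : ∀ t, 0 ≤ p t) (hq : ∀ t, 0 ≤ q t)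
    (hpq : ∑ t, p t = ∑ t, q t) {c : I → I → ℝ} {D : ℝ} (hdiag : ∀ t, c t t ≤ 1)
    (hc : ∀ s t, c s t ≤ D) :
    ∑ s, ∑ t, overlapCoupling p q (s, t) * c s t ≤
      ∑ t, min (p t) (q t) + (∑ t, (p t - min (p t) (q t))) * D := by
  set δ := ∑ t, (p t - min (p t) (q t))
  have hdiag_part : ∑ s, ∑ t, (if s = t then min (p s) (q s) else 0) * c s t ≤
      ∑ t, min (p t) (q t) := by
    simp only [ite_mul, zero_mul, sum_ite_eq, mem_univ, if_true]
    exact sum_le_sum fun t _ => mul_le_of_le_one_right (le_min (hp t) (hq t)) (hdiag t)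
  have hres_part : ∑ s, ∑ t, (p s - min (p s) (q s)) * (q t - min (p t) (q t)) / δ * c s t ≤
      δ * D := by
    calc _ ≤ ∑ s, ∑ t, (p s - min (p s) (q s)) * (q t - min (p t) (q t)) / δ * D := by
          gcongr with s _ t
          · exact div_nonneg (mul_nonneg (sub_nonneg.mpr (min_le_left _ _))
              (sub_nonneg.mpr (min_le_right _ _))) (sum_nonneg fun t _ =>
                sub_nonneg.mpr (min_le_left _ _))
          · exact hc s t
      _ = ∑ s, (p s - min (p s) (q s)) * D := by
          refine sum_congr rfl fun s _ => ?_
          rw [← sum_mul, ← sum_div, ← mul_sum, sum_residual_eq hpq,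
            mul_sum_div_sum_of_nonneg (fun t => sub_nonneg.mpr (min_le_left _ _))]
      _ = δ * D := by rw [← sum_mul]
  simp only [overlapCoupling, add_mul, sum_add_distrib]
  exact add_le_add hdiag_part hres_part

end DecidableEq

theorem exists_coupling_sum_mul_le
    (hp : ∀ t, 0 ≤ p t) (hq : ∀ t, 0 ≤ q t) (hp1 : ∑ t, p t = 1) (hq1 : ∑ t, q t = 1)
    {c : I → I → ℝ} {D : ℝ} (hdiag : ∀ t, c t t ≤ 1) (hc : ∀ s t, c s t ≤ D) :
    ∃ γ : I × I → ℝ, (∀ z, 0 ≤ γ z) ∧ (∀ s, ∑ t, γ (s, t) = p s) ∧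
      (∀ t, ∑ s, γ (s, t) = q t) ∧
      ∑ s, ∑ t, γ (s, t) * c s t ≤ 1 + (1 - ∑ t, min (p t) (q t)) * (D - 1) := by
  classical
  have hpq : ∑ t, p t = ∑ t, q t := hp1.trans hq1.symm
  refine ⟨overlapCoupling p q, overlapCoupling_nonneg hp hq, overlapCoupling_marginal_fst hpq,
    overlapCoupling_marginal_snd hpq, ?_⟩
  have hres : ∑ t, (p t - min (p t) (q t)) = 1 - ∑ t, min (p t) (q t) := by
    rw [sum_sub_distrib, hp1]
  calc _ ≤ _ := sum_overlapCoupling_mul_le hp hq hpq hdiag hc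
    _ = _ := by rw [hres]; ring

variable {u v : I → ℝ} {e : ℝ}

lemma le_sum_min_div_of_sum_le
    (hu : ∀ t, 0 ≤ u t) (hU : 0 < ∑ t, u t) (hv : ∀ t, 0 ≤ v t) (he : e ≤ 1)
    (hvu : ∀ t, e * v t ≤ u t) (hUV : ∑ t, u t ≤ ∑ t, v t) :
    e ≤ ∑ t, min (u t / ∑ s, u s) (v t / ∑ s, v s) := by
  have hV : 0 < ∑ t, v t := hU.trans_le hUV
  calc e = ∑ t, e * v t / ∑ s, v s := by rw [← sum_div, ← mul_sum, mul_div_assoc,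
          div_self hV.ne', mul_one]
    _ ≤ _ := by
      refine sum_le_sum fun t _ => le_min ?_ ?_
      · calc e * v t / ∑ s, v s ≤ u t / ∑ s, v s := by gcongr; exact hvu t
          _ ≤ u t / ∑ s, u s := div_le_div_of_nonneg_left (hu t) hU hUV
      · gcongr
        exact mul_le_of_le_one_left (hv t) he

lemma le_sum_min_div
    (hu : ∀ t, 0 ≤ u t) (hU : 0 < ∑ t, u t) (hv : ∀ t, 0 ≤ v t) (hV : 0 < ∑ t, v t)
    (he : e ≤ 1) (huv : ∀ t, e * u t ≤ v t) (hvu : ∀ t, e * v t ≤ u t) :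
    e ≤ ∑ t, min (u t / ∑ s, u s) (v t / ∑ s, v s) := by
  rcases le_total (∑ t, u t) (∑ t, v t) with hUV | hVU
  · exact le_sum_min_div_of_sum_le hu hU hv he hvu hUV
  · simpa only [min_comm] using le_sum_min_div_of_sum_le hv hV hu he huv hVU

end Coupling

/-- **Expected Cayley distance in the mismatch case.**
Let `E : S_n → ℝ`, `β > 0`, `L_E ≥ 0` satisfy `|E(π) − E(ρ)| ≤ L_E·d_Cay(π,ρ)`,
and set `w(σ) = exp(−β·E(σ))`.  Let `I` be finite and nonempty, `X, Y : I → S_n`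
with `d_Cay(X_t, Y_t) ≤ 1` for all `t` and `d_Cay(X_s, Y_t) ≤ D` for all `s, t`,
where `D ≥ 1`.  With `p(t) = w(X_t)/Σ_s w(X_s)` and `q(t) = w(Y_t)/Σ_s w(Y_s)`,
there exists a coupling `γ` of `p` and `q` with
`Σ_{s,t} γ(s,t)·d_Cay(X_s, Y_t) ≤ 1 + (D − 1)·tanh(β·L_E)`. -/
theorem mismatch_expected_distance {n : ℕ}
    (E : Equiv.Perm (Fin n) → ℝ) (β LE : ℝ) (hβ : 0 < β) (hLE : 0 ≤ LE)
    (hLip : ∀ π ρ : Equiv.Perm (Fin n), |E π - E ρ| ≤ LE * (dCay π ρ : ℝ))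
    {I : Type*} [Fintype I] [Nonempty I]
    (X Y : I → Equiv.Perm (Fin n))
    (hXY : ∀ t, dCay (X t) (Y t) ≤ 1)
    (D : ℝ) (hD : 1 ≤ D)
    (hcross : ∀ s t, (dCay (X s) (Y t) : ℝ) ≤ D)
    (w : Equiv.Perm (Fin n) → ℝ) (hw : ∀ π, w π = Real.exp (-β * E π))
    (p q : I → ℝ)
    (hp : ∀ t, p t = w (X t) / ∑ s, w (X s))
    (hq : ∀ t, q t = w (Y t) / ∑ s, w (Y s)) :
    ∃ γ : I × I → ℝ,
      (∀ z, 0 ≤ γ z) ∧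
      (∀ s, ∑ t, γ (s, t) = p s) ∧
      (∀ t, ∑ s, γ (s, t) = q t) ∧
      ∑ s, ∑ t, γ (s, t) * (dCay (X s) (Y t) : ℝ)
        ≤ 1 + (D - 1) * Real.tanh (β * LE) := by
  have ha : 0 ≤ β * LE := mul_nonneg hβ.le hLE
  have hwpos : ∀ π, 0 < w π := fun π => hw π ▸ Real.exp_pos _
  have hsum_pos : ∀ Z : I → Equiv.Perm (Fin n), 0 < ∑ s, w (Z s) :=
    fun Z => sum_pos (fun s _ => hwpos _) univ_nonempty
  have hnormalized : ∀ Z : I → Equiv.Perm (Fin n), ∑ t, w (Z t) / ∑ s, w (Z s) = 1 :=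
    fun Z => by rw [← sum_div, div_self (hsum_pos Z).ne']
  have hclose : ∀ t, |E (X t) - E (Y t)| ≤ LE := fun t =>
    (hLip _ _).trans (mul_le_of_le_one_right hLE (by exact_mod_cast hXY t))
  have hcomparable : ∀ t, Real.exp (-(β * LE)) * w (X t) ≤ w (Y t) ∧
      Real.exp (-(β * LE)) * w (Y t) ≤ w (X t) := fun t => by
    rw [hw, hw]
    exact ⟨exp_neg_mul_mul_exp_le hβ.le (hclose t),
      exp_neg_mul_mul_exp_le hβ.le (abs_sub_comm (E (X t)) _ ▸ hclose t)⟩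
  have hoverlap : Real.exp (-(β * LE)) ≤ ∑ t, min (p t) (q t) := by
    simp only [hp, hq]
    exact le_sum_min_div (fun t => (hwpos _).le) (hsum_pos X) (fun t => (hwpos _).le)
      (hsum_pos Y) (Real.exp_le_one_iff.mpr (by linarith))
      (fun t => (hcomparable t).1) (fun t => (hcomparable t).2)
  obtain ⟨γ, hγ, hrow, hcol, hcost⟩ :=
    exists_coupling_sum_mul_le (c := fun s t => (dCay (X s) (Y t) : ℝ))
      (fun t => hp t ▸ (div_pos (hwpos _) (hsum_pos X)).le)
      (fun t => hq t ▸ (div_pos (hwpos _) (hsum_pos Y)).le)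
      ((sum_congr rfl fun t _ => hp t).trans (hnormalized X))
      ((sum_congr rfl fun t _ => hq t).trans (hnormalized Y))
      (fun t => by exact_mod_cast hXY t) hcross
  refine ⟨γ, hγ, hrow, hcol, hcost.trans ?_⟩
  have htv : 1 - ∑ t, min (p t) (q t) ≤ Real.tanh (β * LE) :=
    (sub_le_sub_left hoverlap 1).trans (one_sub_exp_neg_le_tanh ha)
  linarith [mul_le_mul_of_nonneg_right htv (sub_nonneg.mpr hD)]
end

section
/- Suppose that for every edge {u,v} ∈ E there exists a coupling ν_{uv} of K(u,·) and K(v,·) (a probability mass function on X×X with marginals K(u,·) and K(v,·)) such that Σ_{x,y} ν_{uv}(x,y)·d(x,y) ≤ e^{−α}·d(u,v) for some fixed α > 0. Then for all t ≥ 0 and all x ∈ X, the total variation distance satisfies ‖K^t(x,·) − π‖_TV ≤ e^{−αt}·diam(X,d), where diam(X,d) = max_{x,y∈X} d(x,y) and K^t denotes the t-step kernel. -/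
/-!
Edge couplings are glued along a shortest path, using the triangle inequality of the path metric
(the gluing lemma), into a coupling of `K(u,·)` and `K(v,·)` of expected distance at most
`e^{-α} d(u,v)` for every pair `u, v`. Mixing these couplings over a coupling of the first step
yields couplings of `K^t(u,·)` and `K^t(v,·)` contracting by `e^{-αt}`. Since `d ≥ 1` off the
diagonal, twice the expected distance of any coupling bounds the `ℓ¹` distance of its marginals,
and writing `π = Σ_z π(z) K^t(z,·)` reduces the distance to `π` to these pairwise bounds.
-/

open Finset

/-- The weight of a walk: the sum of the edge lengths `l` along its darts. -/
noncomputable def walkWeight {X : Type*} {G : SimpleGraph X} (l : X → X → ℝ)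
    {x y : X} (wk : G.Walk x y) : ℝ :=
  (wk.darts.map fun d => l d.fst d.snd).sum

/-- The shortest-path metric induced on `X` by the graph `G` with edge lengths `l`. -/
noncomputable def pathDist {X : Type*} (G : SimpleGraph X) (l : X → X → ℝ)
    (x y : X) : ℝ :=
  sInf {c : ℝ | ∃ wk : G.Walk x y, c = walkWeight l wk}

/-- The `t`-step transition kernel of `K`. -/
noncomputable def kpow {X : Type*} [Fintype X] [DecidableEq X]
    (K : X → X → ℝ) : ℕ → X → X → ℝ
  | 0 => fun x y => if x = y then 1 else 0
  | (t + 1) => fun x y => ∑ z, K x z * kpow K t z y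

open SimpleGraph

section PathDist

variable {X : Type*} {G : SimpleGraph X} {l : X → X → ℝ}

@[simp]
lemma walkWeight_nil {x : X} : walkWeight l (Walk.nil : G.Walk x x) = 0 := by
  simp [walkWeight]

@[simp]
lemma walkWeight_cons {x y z : X} (h : G.Adj x y) (p : G.Walk y z) :
    walkWeight l (Walk.cons h p) = l x y + walkWeight l p := by
  simp [walkWeight]

lemma walkWeight_append {x y z : X} (p : G.Walk x y) (q : G.Walk y z) :
    walkWeight l (p.append q) = walkWeight l p + walkWeight l q := by
  simp [walkWeight, Walk.darts_append]

variable (hl : ∀ u v, G.Adj u v → 0 ≤ l u v)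
include hl

lemma walkWeight_nonneg {x y : X} (p : G.Walk x y) : 0 ≤ walkWeight l p :=
  List.sum_nonneg (by simpa using fun d _ => hl _ _ d.adj)

lemma walkWeight_bypass_le [DecidableEq X] {x y : X} (p : G.Walk x y) :
    walkWeight l p.bypass ≤ walkWeight l p :=
  (p.darts_bypass_sublist_darts.map _).sum_le_sum (by simpa using fun d _ => hl _ _ d.adj)

lemma pathDist_le_walkWeight {x y : X} (p : G.Walk x y) : pathDist G l x y ≤ walkWeight l p :=
  csInf_le ⟨0, by rintro _ ⟨q, rfl⟩; exact walkWeight_nonneg hl q⟩ ⟨p, rfl⟩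

lemma pathDist_nonneg (x y : X) : 0 ≤ pathDist G l x y :=
  Real.sInf_nonneg (by rintro _ ⟨q, rfl⟩; exact walkWeight_nonneg hl q)

lemma pathDist_self (x : X) : pathDist G l x x = 0 :=
  le_antisymm (by simpa using pathDist_le_walkWeight hl (Walk.nil : G.Walk x x))
    (pathDist_nonneg hl x x)

lemma pathDist_le_of_adj {x y : X} (h : G.Adj x y) : pathDist G l x y ≤ l x y := by
  simpa using pathDist_le_walkWeight hl (Walk.cons h Walk.nil)

/-- Bypassing never increases the weight, so the infimum is a minimum over the finitely many
paths. -/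
lemma exists_walkWeight_eq_pathDist [Finite X] {x y : X} (hxy : G.Reachable x y) :
    ∃ p : G.Walk x y, walkWeight l p = pathDist G l x y := by
  classical
  have := Fintype.ofFinite X
  obtain ⟨w⟩ := hxy
  have : Nonempty (G.Path x y) := ⟨⟨w.bypass, w.bypass_isPath⟩⟩
  obtain ⟨p, hp⟩ := Finite.exists_min fun p : G.Path x y => walkWeight l p.1
  refine ⟨p.1, le_antisymm (le_csInf ⟨_, w, rfl⟩ ?_) (pathDist_le_walkWeight hl p.1)⟩
  rintro _ ⟨q, rfl⟩
  exact (hp ⟨q.bypass, q.bypass_isPath⟩).trans (walkWeight_bypass_le hl q)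

lemma pathDist_triangle [Finite X] (hconn : G.Connected) (x y z : X) :
    pathDist G l x z ≤ pathDist G l x y + pathDist G l y z := by
  obtain ⟨p, hp⟩ := exists_walkWeight_eq_pathDist hl (hconn x y)
  obtain ⟨q, hq⟩ := exists_walkWeight_eq_pathDist hl (hconn y z)
  simpa [walkWeight_append, hp, hq] using pathDist_le_walkWeight hl (p.append q)

omit hl in
lemma one_le_pathDist (hl1 : ∀ u v, G.Adj u v → 1 ≤ l u v) (hconn : G.Connected) {x y : X}
    (hxy : x ≠ y) : 1 ≤ pathDist G l x y := by
  obtain ⟨w⟩ := hconn x y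
  refine le_csInf ⟨_, w, rfl⟩ ?_
  rintro _ ⟨_ | ⟨h, q⟩, rfl⟩
  · exact absurd rfl hxy
  · rw [walkWeight_cons]
    linarith [hl1 _ _ h, walkWeight_nonneg (fun u v h => zero_le_one.trans (hl1 u v h)) q]

end PathDist

section Coupling

variable {X : Type*} [Fintype X]

structure IsCoupling (ν : X × X → ℝ) (p q : X → ℝ) : Prop where
  nonneg : ∀ z, 0 ≤ ν z
  sum_fst : ∀ x, ∑ y, ν (x, y) = p x
  sum_snd : ∀ y, ∑ x, ν (x, y) = q y

def transportCost (d : X → X → ℝ) (ν : X × X → ℝ) : ℝ :=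
  ∑ x, ∑ y, ν (x, y) * d x y

namespace IsCoupling

variable {ν : X × X → ℝ} {p q : X → ℝ}

lemma le_fst (h : IsCoupling ν p q) (x y : X) : ν (x, y) ≤ p x :=
  h.sum_fst x ▸ single_le_sum (fun y _ => h.nonneg (x, y)) (mem_univ y)

lemma le_snd (h : IsCoupling ν p q) (x y : X) : ν (x, y) ≤ q y :=
  h.sum_snd y ▸ single_le_sum (fun x _ => h.nonneg (x, y)) (mem_univ x)

lemma diag [DecidableEq X] (hp : ∀ x, 0 ≤ p x) :
    IsCoupling (fun z => if z.1 = z.2 then p z.1 else 0) p p where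
  nonneg z := by split_ifs <;> simp [hp]
  sum_fst x := by simp
  sum_snd y := by simp

lemma single [DecidableEq X] (u v : X) :
    IsCoupling (fun z => if u = z.1 ∧ v = z.2 then 1 else 0) (fun x => if u = x then 1 else 0)
      (fun y => if v = y then 1 else 0) where
  nonneg z := by split_ifs <;> simp
  sum_fst x := by by_cases h : u = x <;> simp [h]
  sum_snd y := by simp [ite_and]

lemma sum_mul_fst (h : IsCoupling ν p q) (f : X → ℝ) : ∑ z, ν z * f z.1 = ∑ x, p x * f x := by
  simp only [Fintype.sum_prod_type, ← sum_mul, h.sum_fst]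

lemma sum_mul_snd (h : IsCoupling ν p q) (f : X → ℝ) : ∑ z, ν z * f z.2 = ∑ y, q y * f y := by
  rw [Fintype.sum_prod_type, sum_comm]
  simp only [← sum_mul, h.sum_snd]

lemma mix {ι : Type*} [Fintype ι] {w : ι → ℝ} (hw : ∀ i, 0 ≤ w i) {μ : ι → X × X → ℝ}
    {P Q : ι → X → ℝ} (hμ : ∀ i, IsCoupling (μ i) (P i) (Q i))
    (hp : ∀ x, ∑ i, w i * P i x = p x) (hq : ∀ y, ∑ i, w i * Q i y = q y) :
    IsCoupling (fun z => ∑ i, w i * μ i z) p q where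
  nonneg z := sum_nonneg fun i _ => mul_nonneg (hw i) ((hμ i).nonneg z)
  sum_fst x := by rw [sum_comm]; simp only [← mul_sum, (hμ _).sum_fst, hp]
  sum_snd y := by rw [sum_comm]; simp only [← mul_sum, (hμ _).sum_snd, hq]

/-- The gluing lemma: `ν₁ (x, y) * ν₂ (y, z) / q y` is a coupling of `p`, `q`, `r` on `X × X × X`
whose two-dimensional marginals are `ν₁` and `ν₂`. -/
lemma glue {d : X → X → ℝ} (hd : ∀ x y z, d x z ≤ d x y + d y z) {r : X → ℝ}
    {ν₁ ν₂ : X × X → ℝ} (h₁ : IsCoupling ν₁ p q) (h₂ : IsCoupling ν₂ q r) :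
    ∃ ν, IsCoupling ν p r ∧ transportCost d ν ≤ transportCost d ν₁ + transportCost d ν₂ := by
  set ρ : X → X → X → ℝ := fun x y z => ν₁ (x, y) * ν₂ (y, z) / q y
  have hρ0 x y z : 0 ≤ ρ x y z :=
    div_nonneg (mul_nonneg (h₁.nonneg _) (h₂.nonneg _)) ((h₁.nonneg (x, y)).trans (h₁.le_snd x y))
  have hρ₁ x y : ∑ z, ρ x y z = ν₁ (x, y) := by
    simp only [ρ, ← sum_div, ← mul_sum, h₂.sum_fst]
    exact mul_div_cancel_of_imp fun hq => le_antisymm (hq ▸ h₁.le_snd x y) (h₁.nonneg _)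
  have hρ₂ y z : ∑ x, ρ x y z = ν₂ (y, z) := by
    simp only [ρ, ← sum_div, ← sum_mul, h₁.sum_snd]
    exact mul_div_cancel_left_of_imp fun hq => le_antisymm (hq ▸ h₂.le_fst y z) (h₂.nonneg _)
  refine ⟨fun w => ∑ y, ρ w.1 y w.2, ⟨fun w => sum_nonneg fun y _ => hρ0 _ _ _, fun x => ?_,
    fun z => ?_⟩, ?_⟩
  · rw [sum_comm]; simp only [hρ₁, h₁.sum_fst]
  · rw [sum_comm]; simp only [hρ₂, h₂.sum_snd]
  calc transportCost d (fun w => ∑ y, ρ w.1 y w.2)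
      = ∑ x, ∑ z, ∑ y, ρ x y z * d x z := by simp only [transportCost, sum_mul]
    _ ≤ ∑ x, ∑ z, ∑ y, (ρ x y z * d x y + ρ x y z * d y z) := by
      gcongr with x _ z _ y _
      rw [← mul_add]
      exact mul_le_mul_of_nonneg_left (hd x y z) (hρ0 x y z)
    _ = transportCost d ν₁ + transportCost d ν₂ := by
      simp only [sum_add_distrib, transportCost]
      congr 1
      · refine sum_congr rfl fun x _ => ?_
        rw [sum_comm]
        simp only [← sum_mul, hρ₁]
      · rw [sum_comm, sum_comm (f := fun y z => ν₂ (y, z) * d y z)]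
        refine sum_congr rfl fun z _ => ?_
        rw [sum_comm]
        simp only [← sum_mul, hρ₂]

lemma sum_abs_sub_le_two_mul_transportCost {d : X → X → ℝ} (hd : ∀ x y, 0 ≤ d x y)
    (hd₁ : ∀ x y, x ≠ y → 1 ≤ d x y) (h : IsCoupling ν p q) :
    ∑ x, |p x - q x| ≤ 2 * transportCost d ν := by
  have hpair x y : |ν (x, y) - ν (y, x)| ≤ ν (x, y) * d x y + ν (y, x) * d y x := by
    have h₁ := h.nonneg (x, y)
    have h₂ := h.nonneg (y, x)
    rcases eq_or_ne x y with rfl | hxy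
    · rw [sub_self, abs_zero]
      exact add_nonneg (mul_nonneg h₁ (hd x x)) (mul_nonneg h₁ (hd x x))
    calc |ν (x, y) - ν (y, x)| ≤ ν (x, y) + ν (y, x) :=
          abs_sub_le_iff.2 ⟨by linarith, by linarith⟩
      _ ≤ ν (x, y) * d x y + ν (y, x) * d y x :=
          add_le_add (le_mul_of_one_le_right h₁ (hd₁ x y hxy))
            (le_mul_of_one_le_right h₂ (hd₁ y x hxy.symm))
  calc ∑ x, |p x - q x| = ∑ x, |∑ y, (ν (x, y) - ν (y, x))| := by
        simp only [sum_sub_distrib, h.sum_fst, h.sum_snd]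
    _ ≤ ∑ x, ∑ y, |ν (x, y) - ν (y, x)| := sum_le_sum fun x _ => abs_sum_le_sum_abs _ _
    _ ≤ ∑ x, ∑ y, (ν (x, y) * d x y + ν (y, x) * d y x) := by
        gcongr with x _ y _
        exact hpair x y
    _ = 2 * transportCost d ν := by
        simp only [sum_add_distrib]
        rw [sum_comm (f := fun x y => ν (y, x) * d y x), transportCost]
        ring

end IsCoupling

variable (d : X → X → ℝ)

lemma transportCost_eq_sum (ν : X × X → ℝ) : transportCost d ν = ∑ z, ν z * d z.1 z.2 :=
  (Fintype.sum_prod_type fun z => ν z * d z.1 z.2).symm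

lemma transportCost_mix {ι : Type*} [Fintype ι] (w : ι → ℝ) (μ : ι → X × X → ℝ) :
    transportCost d (fun z => ∑ i, w i * μ i z) = ∑ i, w i * transportCost d (μ i) := by
  simp only [transportCost_eq_sum, sum_mul, mul_sum, mul_assoc]
  exact sum_comm

lemma transportCost_diag [DecidableEq X] (hd : ∀ x, d x x = 0) (p : X → ℝ) :
    transportCost d (fun z => if z.1 = z.2 then p z.1 else 0) = 0 := by
  simp [transportCost, hd]

lemma transportCost_single [DecidableEq X] (u v : X) :
    transportCost d (fun z => if u = z.1 ∧ v = z.2 then 1 else 0) = d u v := by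
  simp [transportCost, ite_and]

lemma sum_abs_sub_le_of_eq_sum_mul {ι : Type*} [Fintype ι] {w : ι → ℝ} (hw : ∀ i, 0 ≤ w i)
    (hw₁ : ∑ i, w i = 1) {p q : X → ℝ} {Q : ι → X → ℝ} (hq : ∀ x, ∑ i, w i * Q i x = q x) :
    ∑ x, |p x - q x| ≤ ∑ i, w i * ∑ x, |p x - Q i x| := by
  calc ∑ x, |p x - q x| = ∑ x, |∑ i, w i * (p x - Q i x)| := by
        simp only [mul_sub, sum_sub_distrib, ← sum_mul, hw₁, one_mul, hq]
    _ ≤ ∑ x, ∑ i, w i * |p x - Q i x| := by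
        gcongr with x _
        refine (abs_sum_le_sum_abs _ _).trans_eq (sum_congr rfl fun i _ => ?_)
        rw [abs_mul, abs_of_nonneg (hw i)]
    _ = ∑ i, w i * ∑ x, |p x - Q i x| := by
        rw [sum_comm]
        simp only [mul_sum]

end Coupling

section Kernel

variable {X : Type*} [Fintype X] [DecidableEq X] {K : X → X → ℝ}

lemma sum_mul_kpow_of_stationary {π : X → ℝ} (hstat : ∀ y, ∑ x, π x * K x y = π y) (t : ℕ)
    (y : X) : ∑ x, π x * kpow K t x y = π y := by
  induction t generalizing y with
  | zero => simp [kpow]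
  | succ t ih =>
    simp only [kpow, mul_sum, ← mul_assoc]
    rw [sum_comm]
    simp only [← sum_mul, hstat, ih]

lemma exists_isCoupling_kpow {d : X → X → ℝ} {c : ℝ} (hc : 0 ≤ c)
    (h : ∀ u v, ∃ ν, IsCoupling ν (K u) (K v) ∧ transportCost d ν ≤ c * d u v) (t : ℕ) (u v : X) :
    ∃ μ, IsCoupling μ (kpow K t u) (kpow K t v) ∧ transportCost d μ ≤ c ^ t * d u v := by
  induction t generalizing u v with
  | zero => exact ⟨_, IsCoupling.single u v, by simp [transportCost_single]⟩
  | succ t ih =>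
    choose μ hμ hμd using ih
    obtain ⟨ν, hν, hνd⟩ := h u v
    refine ⟨fun z => ∑ i : X × X, ν i * μ i.1 i.2 z,
      IsCoupling.mix hν.nonneg (fun i => hμ i.1 i.2) (fun x => hν.sum_mul_fst (kpow K t · x))
        (fun y => hν.sum_mul_snd (kpow K t · y)), ?_⟩
    calc transportCost d (fun z => ∑ i : X × X, ν i * μ i.1 i.2 z)
        = ∑ i : X × X, ν i * transportCost d (μ i.1 i.2) := transportCost_mix d _ _
      _ ≤ ∑ i : X × X, ν i * (c ^ t * d i.1 i.2) := by
        gcongr with i _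
        exacts [hν.nonneg i, hμd i.1 i.2]
      _ = c ^ t * transportCost d ν := by
        rw [transportCost_eq_sum, mul_sum]
        exact sum_congr rfl fun i _ => by ring
      _ ≤ c ^ (t + 1) * d u v := by
        rw [pow_succ, mul_assoc]
        gcongr

end Kernel

section PathCoupling

variable {X : Type*} [Fintype X] [DecidableEq X] {G : SimpleGraph X} {l : X → X → ℝ}
  {K : X → X → ℝ} {c : ℝ}
  (hl : ∀ u v, G.Adj u v → 0 ≤ l u v) (hconn : G.Connected) (hK : ∀ x y, 0 ≤ K x y) (hc : 0 ≤ c)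
  (hedge : ∀ u v, G.Adj u v →
    ∃ ν, IsCoupling ν (K u) (K v) ∧ transportCost (pathDist G l) ν ≤ c * pathDist G l u v)
include hl hconn hK hc hedge

lemma exists_isCoupling_walkWeight {u v : X} (p : G.Walk u v) :
    ∃ ν, IsCoupling ν (K u) (K v) ∧ transportCost (pathDist G l) ν ≤ c * walkWeight l p := by
  induction p with
  | nil => exact ⟨_, IsCoupling.diag (hK _), by simp [transportCost_diag _ (pathDist_self hl)]⟩
  | cons hadj p ih =>
    obtain ⟨ν₁, h₁, hd₁⟩ := hedge _ _ hadj
    obtain ⟨ν₂, h₂, hd₂⟩ := ih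
    obtain ⟨ν, h, hd⟩ := h₁.glue (pathDist_triangle hl hconn) h₂
    refine ⟨ν, h, ?_⟩
    calc transportCost (pathDist G l) ν ≤ c * pathDist G l _ _ + c * walkWeight l p :=
          hd.trans (add_le_add hd₁ hd₂)
      _ ≤ c * walkWeight l (Walk.cons hadj p) := by
          rw [walkWeight_cons, mul_add]
          gcongr
          exact pathDist_le_of_adj hl hadj

lemma exists_isCoupling_pathDist (u v : X) :
    ∃ ν, IsCoupling ν (K u) (K v) ∧ transportCost (pathDist G l) ν ≤ c * pathDist G l u v := by
  obtain ⟨p, hp⟩ := exists_walkWeight_eq_pathDist hl (hconn u v)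
  simpa only [hp] using exists_isCoupling_walkWeight hl hconn hK hc hedge p

end PathCoupling

theorem path_coupling_general {X : Type*} [Fintype X] [DecidableEq X]
    (G : SimpleGraph X) (hconn : G.Connected)
    (l : X → X → ℝ)
    (hl1 : ∀ u v, G.Adj u v → 1 ≤ l u v)
    (K : X → X → ℝ) (hK0 : ∀ x y, 0 ≤ K x y)
    (π : X → ℝ) (hπ0 : ∀ x, 0 ≤ π x) (hπ1 : ∑ x, π x = 1)
    (hstat : ∀ y, ∑ x, π x * K x y = π y)
    (α : ℝ)
    (hcouple : ∀ u v, G.Adj u v → ∃ ν : X × X → ℝ,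
      (∀ z, 0 ≤ ν z) ∧
      (∀ x, ∑ y, ν (x, y) = K u x) ∧
      (∀ y, ∑ x, ν (x, y) = K v y) ∧
      ∑ x, ∑ y, ν (x, y) * pathDist G l x y ≤ Real.exp (-α) * pathDist G l u v) :
    ∀ (t : ℕ) (x : X),
      (1 / 2) * ∑ y, |kpow K t x y - π y|
        ≤ Real.exp (-α * t) * sSup {c : ℝ | ∃ u v : X, c = pathDist G l u v} := by
  intro t x
  set D := sSup {c : ℝ | ∃ u v : X, c = pathDist G l u v}
  have hl : ∀ u v, G.Adj u v → 0 ≤ l u v := fun u v h => zero_le_one.trans (hl1 u v h)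
  have hedge u v (h : G.Adj u v) : ∃ ν, IsCoupling ν (K u) (K v) ∧
      transportCost (pathDist G l) ν ≤ Real.exp (-α) * pathDist G l u v := by
    obtain ⟨ν, h0, h1, h2, hcost⟩ := hcouple u v h
    exact ⟨ν, ⟨h0, h1, h2⟩, hcost⟩
  have hdiam u v : pathDist G l u v ≤ D :=
    le_csSup ((Set.finite_range fun z : X × X => pathDist G l z.1 z.2).subset
      (by rintro _ ⟨u, v, rfl⟩; exact ⟨(u, v), rfl⟩)).bddAbove ⟨u, v, rfl⟩
  have htv z : (1 / 2) * ∑ y, |kpow K t x y - kpow K t z y|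
      ≤ Real.exp (-α) ^ t * pathDist G l x z := by
    obtain ⟨μ, hμ, hcost⟩ := exists_isCoupling_kpow (Real.exp_pos _).le
      (exists_isCoupling_pathDist hl hconn hK0 (Real.exp_pos _).le hedge) t x z
    linarith [hμ.sum_abs_sub_le_two_mul_transportCost (pathDist_nonneg hl)
      fun _ _ => one_le_pathDist hl1 hconn]
  calc (1 / 2) * ∑ y, |kpow K t x y - π y|
      ≤ (1 / 2) * ∑ z, π z * ∑ y, |kpow K t x y - kpow K t z y| :=
        mul_le_mul_of_nonneg_left
          (sum_abs_sub_le_of_eq_sum_mul hπ0 hπ1 (sum_mul_kpow_of_stationary hstat t)) (by norm_num)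
    _ ≤ ∑ z, π z * (Real.exp (-α) ^ t * D) := by
        rw [mul_sum]
        refine sum_le_sum fun z _ => ?_
        rw [mul_left_comm]
        exact mul_le_mul_of_nonneg_left ((htv z).trans (by gcongr; exact hdiam x z)) (hπ0 z)
    _ = Real.exp (-α * t) * D := by
        rw [← sum_mul, hπ1, one_mul, ← Real.exp_nat_mul, mul_comm (t : ℝ)]

/-- **Path coupling theorem (Bubley–Dyer).**
Let `G = (X, E)` be a finite connected graph with edge lengths `l ≥ 1` and
induced shortest-path metric `d`, and let `K` be a Markov kernel on `X` with
stationary distribution `π`.  Suppose that for every edge `{u,v}` there exists a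
coupling `ν` of `K(u,·)` and `K(v,·)` with
`Σ_{x,y} ν(x,y)·d(x,y) ≤ e^{−α}·d(u,v)` for some fixed `α > 0`.  Then for all
`t ≥ 0` and all `x ∈ X`,
`‖K^t(x,·) − π‖_TV ≤ e^{−αt}·diam(X,d)`. -/
theorem path_coupling {X : Type*} [Fintype X] [DecidableEq X] [Nonempty X]
    (G : SimpleGraph X) (hconn : G.Connected)
    (l : X → X → ℝ) (hlsymm : ∀ u v, l u v = l v u)
    (hl1 : ∀ u v, G.Adj u v → 1 ≤ l u v)
    (K : X → X → ℝ) (hK0 : ∀ x y, 0 ≤ K x y) (hK1 : ∀ x, ∑ y, K x y = 1)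
    (π : X → ℝ) (hπ0 : ∀ x, 0 ≤ π x) (hπ1 : ∑ x, π x = 1)
    (hstat : ∀ y, ∑ x, π x * K x y = π y)
    (α : ℝ) (hα : 0 < α)
    (hcouple : ∀ u v, G.Adj u v → ∃ ν : X × X → ℝ,
      (∀ z, 0 ≤ ν z) ∧
      (∀ x, ∑ y, ν (x, y) = K u x) ∧
      (∀ y, ∑ x, ν (x, y) = K v y) ∧
      ∑ x, ∑ y, ν (x, y) * pathDist G l x y ≤ Real.exp (-α) * pathDist G l u v) :
    ∀ (t : ℕ) (x : X),
      (1 / 2) * ∑ y, |kpow K t x y - π y|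
        ≤ Real.exp (-α * t) * sSup {c : ℝ | ∃ u v : X, c = pathDist G l u v} :=
  path_coupling_general G hconn l hl1 K hK0 π hπ0 hπ1 hstat α hcouple
end
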